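/- arXiv:2006.10821 — 2 statements merged into one kernel-verified Lean document; each statement's English description precedes it below -/
import Mathlib

section
/- Let 𝒜 be a van Hove sequence. The set MAP_𝒜(G) of functions in C_u(G) that are mean almost periodic with respect to 𝒜 is a ℂ-linear subspace of C_u(G), is closed in C_u(G) with respect to the sup-norm, and is invariant under translations (f ∈ MAP_𝒜(G) implies τ_t f ∈ MAP_𝒜(G) for all t ∈ G). -/
open MeasureTheory Filter Topology
open scoped ENNReal Pointwise

noncomputable section

namespace MAP

section Defs

variable {G : Type*} [MeasurableSpace G] [TopologicalSpace G] [AddCommGroup G]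

/-- The `K`-boundary `∂^K A` of a set `A`. -/
def kBoundary (K A : Set G) : Set G :=
  (closure (A + K) \ A) ∪ ((Aᶜ - K) ∩ closure A)

/-- A van Hove sequence: nonempty relatively compact open sets whose `K`-boundaries
become negligible compared to their volume. -/
structure IsVanHove (θ : Measure G) (A : ℕ → Set G) : Prop where
  isOpen : ∀ n, IsOpen (A n)
  nonempty : ∀ n, (A n).Nonempty
  relCompact : ∀ n, IsCompact (closure (A n))
  boundary : ∀ K : Set G, IsCompact K →
    Tendsto (fun n => θ (kBoundary K (A n)) / θ (A n)) atTop (𝓝 0)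

/-- `(1/θ(A)) ∫_A |f|^p`, valued in `ℝ≥0∞`. -/
def lpAvg (θ : Measure G) (A : Set G) (p : ℝ) (f : G → ℂ) : ℝ≥0∞ :=
  (∫⁻ t in A, ENNReal.ofReal (‖f t‖ ^ p) ∂θ) / θ A

/-- The Besicovitch seminorm `‖f‖_{b,p,𝒜}`. -/
def besSN (θ : Measure G) (A : ℕ → Set G) (p : ℝ) (f : G → ℂ) : ℝ≥0∞ :=
  (limsup (fun n => lpAvg θ (A n) p f) atTop) ^ (1 / p)

/-- The Weyl seminorm `‖f‖_{w,p,𝒜}`. -/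
def weylSN (θ : Measure G) (A : ℕ → Set G) (p : ℝ) (f : G → ℂ) : ℝ≥0∞ :=
  (limsup (fun n => ⨆ x : G, lpAvg θ (x +ᵥ A n) p f) atTop) ^ (1 / p)

/-- Membership in `L^p_loc`. -/
def MemLpLoc (θ : Measure G) (p : ℝ) (f : G → ℂ) : Prop :=
  AEStronglyMeasurable f θ ∧
    ∀ K : Set G, IsCompact K → (∫⁻ t in K, ENNReal.ofReal (‖f t‖ ^ p) ∂θ) < ⊤

/-- A relatively dense subset of `G`. -/
def RelDense (S : Set G) : Prop :=
  ∃ K : Set G, IsCompact K ∧ ∀ g : G, ∃ t ∈ S, g - t ∈ K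

/-- Mean almost periodicity of a function with respect to a van Hove sequence. -/
def MeanAP (θ : Measure G) (A : ℕ → Set G) (f : G → ℂ) : Prop :=
  ∀ ε : ℝ, 0 < ε →
    RelDense {t : G | besSN θ A 1 (fun s => f s - f (s - t)) < ENNReal.ofReal ε}

/-- `C_c(G)`: continuous compactly supported functions. -/
def IsCc (φ : G → ℂ) : Prop := Continuous φ ∧ HasCompactSupport φ

/-- `(1/θ(A)) ∫_A f`, valued in `ℂ`. -/
def cAvg (θ : Measure G) (A : Set G) (f : G → ℂ) : ℂ :=
  (∫ t in A, f t ∂θ) / ((θ A).toReal : ℂ)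

/-- `(1/θ(A)) ∫_{s+A} f`, valued in `ℂ`. -/
def shiftAvg (θ : Measure G) (A : Set G) (s : G) (f : G → ℂ) : ℂ :=
  (∫ t in s +ᵥ A, f t ∂θ) / ((θ A).toReal : ℂ)

/-- `(1/θ(A)) ∫_{s+A} f` for a real-valued `f`. -/
def shiftAvgR (θ : Measure G) (A : Set G) (s : G) (f : G → ℝ) : ℝ :=
  (∫ t in s +ᵥ A, f t ∂θ) / (θ A).toReal

/-- The mean `M_𝒜(f)` exists and equals `c`. -/
def MeanTendsto (θ : Measure G) (A : ℕ → Set G) (f : G → ℂ) (c : ℂ) : Prop :=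
  Tendsto (fun n => cAvg θ (A n) f) atTop (𝓝 c)

/-- The Dirac comb of a point set. -/
def diracComb (Λ : Set G) : Measure G := Measure.sum fun x : Λ => Measure.dirac (x : G)

/-- Convolution `(μ * φ)(t) = ∫ φ(t - s) dμ(s)` of a positive measure with a function. -/
def convM (μ : Measure G) (φ : G → ℂ) : G → ℂ := fun t => ∫ s, φ (t - s) ∂μ

/-- Uniform discreteness of a point set. -/
def UnifDiscrete (Λ : Set G) : Prop :=
  ∃ U : Set G, IsOpen U ∧ (0 : G) ∈ U ∧
    ∀ x ∈ Λ, ∀ y ∈ Λ, x ≠ y → (x +ᵥ U) ∩ (y +ᵥ U) = ∅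

/-- Delone sets: uniformly discrete and relatively dense. -/
def IsDelone (Λ : Set G) : Prop := UnifDiscrete Λ ∧ RelDense Λ

end Defs

section CharDefs

variable (G : Type*) [TopologicalSpace G] [AddCommGroup G]

/-- The set of continuous characters of `G`, inside `C(G, ℂ)`. -/
def CharSet : Set C(G, ℂ) :=
  {χ | (∀ x, ‖χ x‖ = 1) ∧ ∀ x y, χ (x + y) = χ x * χ y}

/-- The dual group `Ĝ` of continuous characters, with the compact-open topology. -/
abbrev Char : Type _ := ↥(CharSet G)

instance : MeasurableSpace (Char G) := borel _

instance : BorelSpace (Char G) := ⟨rfl⟩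

end CharDefs

section CharUse

variable {G : Type*} [MeasurableSpace G] [TopologicalSpace G] [AddCommGroup G]

/-- Trigonometric polynomials: finite linear combinations of characters. -/
def IsTrigPoly (P : G → ℂ) : Prop :=
  ∃ (n : ℕ) (c : Fin n → ℂ) (χ : Fin n → Char G),
    P = fun x => ∑ i, c i * ((χ i : C(G, ℂ)) x)

/-- Besicovitch `p`-almost periodicity of a function. -/
def BapMem (θ : Measure G) (A : ℕ → Set G) (p : ℝ) (f : G → ℂ) : Prop :=
  MemLpLoc θ p f ∧ ∀ ε : ℝ, 0 < ε →
    ∃ P : G → ℂ, IsTrigPoly P ∧ besSN θ A p (fun x => f x - P x) < ENNReal.ofReal ε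

/-- Weyl `p`-almost periodicity of a function. -/
def WapMem (θ : Measure G) (A : ℕ → Set G) (p : ℝ) (f : G → ℂ) : Prop :=
  MemLpLoc θ p f ∧ ∀ ε : ℝ, 0 < ε →
    ∃ P : G → ℂ, IsTrigPoly P ∧ weylSN θ A p (fun x => f x - P x) < ENNReal.ofReal ε

/-- The Fourier–Bohr coefficient of `f` at `χ` along `A` exists and equals `a`. -/
def FBTendsto (θ : Measure G) (A : ℕ → Set G) (f : G → ℂ) (χ : Char G) (a : ℂ) : Prop :=
  MeanTendsto θ A (fun t => (starRingEnd ℂ) ((χ : C(G, ℂ)) t) * f t) a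

/-- `φ̌(χ) = ∫ χ(t) φ(t) dt`. -/
def checkFn (θ : Measure G) (φ : G → ℂ) (χ : Char G) : ℂ :=
  ∫ t, (χ : C(G, ℂ)) t * φ t ∂θ

/-- `(φ * ψ̃)(x) = ∫ φ(x - y) conj(ψ(-y)) dy`. -/
def tildeConv (θ : Measure G) (φ ψ : G → ℂ) : G → ℂ :=
  fun x => ∫ y, φ (x - y) * (starRingEnd ℂ) (ψ (-y)) ∂θ

/-- A pure point measure. -/
def PurePointM {X : Type*} [MeasurableSpace X] (σ : Measure X) : Prop :=
  ∀ B : Set X, MeasurableSet B → σ B = ∑' x : B, σ {(x : X)}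

end CharUse

section TB

variable (Γ : Type*) [MeasurableSpace Γ] [TopologicalSpace Γ] [AddCommGroup Γ]

/-- A translation bounded complex (Radon) measure, given by its total variation
measure together with a unimodular density (polar decomposition). -/
structure TBMeasure where
  tv : Measure Γ
  dens : Γ → ℂ
  dens_meas : Measurable dens
  dens_norm : ∀ x, ‖dens x‖ = 1
  bounded : ∀ K : Set Γ, IsCompact K → ∃ C : ℝ≥0∞, C ≠ ⊤ ∧ ∀ t : Γ, tv (t +ᵥ K) ≤ C

end TB

section TBUse

variable {G : Type*} [MeasurableSpace G] [TopologicalSpace G] [AddCommGroup G]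

/-- `∫ f dμ` for a translation bounded complex measure. -/
def TBMeasure.integral (μ : TBMeasure G) (f : G → ℂ) : ℂ := ∫ x, f x * μ.dens x ∂μ.tv

/-- `(μ * φ)(t) = ∫ φ(t - s) dμ(s)`. -/
def TBMeasure.conv (μ : TBMeasure G) (φ : G → ℂ) : G → ℂ :=
  fun t => ∫ s, φ (t - s) * μ.dens s ∂μ.tv

/-- `(1/θ(A_n)) · (μ|_{A_n} * ν̃|_{-A_n})(φ)`, the `n`-th Eberlein pairing of `μ` with `ν̃`. -/
def ebPair (θ : Measure G) (A : ℕ → Set G) (μ ν : TBMeasure G) (φ : G → ℂ) (n : ℕ) : ℂ :=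
  (∫ s in A n, ∫ u in A n, φ (s - u) * μ.dens s * (starRingEnd ℂ) (ν.dens u) ∂ν.tv ∂μ.tv) /
    ((θ (A n)).toReal : ℂ)

/-- Fourier–Bohr coefficient of a translation bounded measure along `A`. -/
def FBTendstoM (θ : Measure G) (A : ℕ → Set G) (μ : TBMeasure G) (χ : Char G) (a : ℂ) : Prop :=
  Tendsto (fun n =>
      (∫ t in A n, (starRingEnd ℂ) ((χ : C(G, ℂ)) t) * μ.dens t ∂μ.tv) /
        ((θ (A n)).toReal : ℂ))
    atTop (𝓝 a)

/-- `σ` is the Fourier transform of the positive definite measure `γ`: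
`∫_{Ĝ} |φ̌|² dσ = ∫_G (φ * φ̃) dγ` for all `φ ∈ C_c(G)`. -/
def IsFTOf (θ : Measure G) (γ : TBMeasure G) (σ : Measure (Char G)) : Prop :=
  ∀ φ : G → ℂ, IsCc φ → ∃ r : ℝ, 0 ≤ r ∧
    γ.integral (tildeConv θ φ φ) = (r : ℂ) ∧
    (∫⁻ χ, ENNReal.ofReal (‖checkFn θ φ χ‖ ^ 2) ∂σ) = ENNReal.ofReal r

end TBUse

section UniformDefs

variable {H : Type*} [UniformSpace H]

/-- `C_u(G)`: bounded uniformly continuous functions. -/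
def CuFun (f : H → ℂ) : Prop := UniformContinuous f ∧ ∃ C : ℝ, ∀ x, ‖f x‖ ≤ C

/-- Bohr (strong) almost periodicity. -/
def BohrAP [AddCommGroup H] (f : H → ℂ) : Prop :=
  CuFun f ∧ ∀ ε : ℝ, 0 < ε → RelDense {t : H | ∀ x, ‖f x - f (x - t)‖ ≤ ε}

end UniformDefs

end MAP

open MAP

/-!
Write `D_f(t) = ‖f - τ_t f‖_{b,1,𝒜}`. The van Hove property makes `‖·‖_{b,1,𝒜}` invariant under
translation of bounded functions, so `D_f` is subadditive and symmetric, i.e. `(s, t) ↦ D_f(s - t)`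
is a translation invariant pseudometric on `G`. For uniformly continuous `f` it is small near `0`,
and then mean almost periodicity (relative density of the balls `{D_f < ε}`) amounts to total
boundedness of this pseudometric. Total boundedness passes from `D_f` and `D_g` to
`D_{f+g} ≤ D_f + D_g`, which gives sums; scalar multiples, uniform limits and translates only need
direct estimates of `D`.
-/

theorem ENNReal.limsup_add_le_nat (u v : ℕ → ℝ≥0∞) :
    limsup (u + v) atTop ≤ limsup u atTop + limsup v atTop := by
  simp only [limsup_eq_iInf_iSup_of_nat]
  rw [ENNReal.iInf_add_iInf fun i j => ⟨max i j, add_le_add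
    (biSup_mono fun _ => le_of_max_le_left) (biSup_mono fun _ => le_of_max_le_right)⟩]
  refine iInf_mono fun n => iSup₂_le fun i hi => ?_
  exact add_le_add (le_iSup₂ (f := fun i (_ : i ≥ n) => u i) i hi)
    (le_iSup₂ (f := fun i (_ : i ≥ n) => v i) i hi)

namespace MAP

theorem exists_bound_sub_comp_sub {G : Type*} [Sub G] {f : G → ℂ} (hb : ∃ C, ∀ x, ‖f x‖ ≤ C) (t : G) :
    ∃ C, ∀ x, ‖f x - f (x - t)‖ ≤ C :=
  let ⟨C, hC⟩ := hb
  ⟨C + C, fun x => (norm_sub_le _ _).trans (add_le_add (hC x) (hC (x - t)))⟩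

section Besicovitch

variable {G : Type*} [MeasurableSpace G] (θ : Measure G) (A : ℕ → Set G)

theorem besSN_congr_norm (p : ℝ) {h k : G → ℂ} (hhk : ∀ x, ‖h x‖ = ‖k x‖) :
    besSN θ A p h = besSN θ A p k := by
  simp only [besSN, lpAvg, hhk]

theorem besSN_one_eq (h : G → ℂ) :
    besSN θ A 1 h = limsup (fun n => (∫⁻ t in A n, ‖h t‖ₑ ∂θ) / θ (A n)) atTop := by
  simp only [besSN, lpAvg, div_one, ENNReal.rpow_one, Real.rpow_one, ofReal_norm]

theorem besSN_one_le_ofReal {h : G → ℂ} {C : ℝ} (hC : ∀ x, ‖h x‖ ≤ C) :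
    besSN θ A 1 h ≤ ENNReal.ofReal C := by
  rw [besSN_one_eq]
  refine limsup_le_of_le (by isBoundedDefault) (Eventually.of_forall fun n => ?_)
  refine ENNReal.div_le_of_le_mul ?_
  calc ∫⁻ t in A n, ‖h t‖ₑ ∂θ ≤ ∫⁻ _ in A n, ENNReal.ofReal C ∂θ :=
        lintegral_mono fun t => by rw [← ofReal_norm]; exact ENNReal.ofReal_le_ofReal (hC t)
    _ = ENNReal.ofReal C * θ (A n) := setLIntegral_const _ _

theorem besSN_one_le_add_ofReal {h k : G → ℂ} {C : ℝ} (hC : ∀ x, ‖h x‖ ≤ ‖k x‖ + C) :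
    besSN θ A 1 h ≤ besSN θ A 1 k + ENNReal.ofReal C := by
  rw [besSN_one_eq, besSN_one_eq]
  calc limsup (fun n => (∫⁻ t in A n, ‖h t‖ₑ ∂θ) / θ (A n)) atTop
      ≤ limsup (fun n => (∫⁻ t in A n, ‖k t‖ₑ ∂θ) / θ (A n) + ENNReal.ofReal C) atTop := by
        refine limsup_le_limsup (Eventually.of_forall fun n => ?_)
        calc (∫⁻ t in A n, ‖h t‖ₑ ∂θ) / θ (A n)
            ≤ (∫⁻ t in A n, (‖k t‖ₑ + ENNReal.ofReal C) ∂θ) / θ (A n) := by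
              refine ENNReal.div_le_div_right (lintegral_mono fun t => ?_) _
              rw [← ofReal_norm, ← ofReal_norm]
              exact (ENNReal.ofReal_le_ofReal (hC t)).trans ENNReal.ofReal_add_le
          _ = (∫⁻ t in A n, ‖k t‖ₑ ∂θ) / θ (A n) + ENNReal.ofReal C * θ (A n) / θ (A n) := by
              rw [lintegral_add_right _ measurable_const, setLIntegral_const, ENNReal.add_div]
          _ ≤ _ := by
              rw [mul_div_assoc]
              exact add_le_add le_rfl (mul_le_of_le_one_right' ENNReal.div_self_le_one)
    _ = _ := limsup_add_const _ _ _ (by isBoundedDefault) (by isBoundedDefault)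

theorem besSN_one_add_le {h₁ h₂ : G → ℂ} (hh₁ : Measurable h₁) :
    besSN θ A 1 (fun x => h₁ x + h₂ x) ≤ besSN θ A 1 h₁ + besSN θ A 1 h₂ := by
  rw [besSN_one_eq, besSN_one_eq, besSN_one_eq]
  refine (limsup_le_limsup (Eventually.of_forall fun n => ?_)).trans
    (ENNReal.limsup_add_le_nat _ _)
  rw [Pi.add_apply, ← ENNReal.add_div, ← lintegral_add_left hh₁.enorm]
  exact ENNReal.div_le_div_right (lintegral_mono fun t => enorm_add_le _ _) _

theorem besSN_one_const_mul (c : ℂ) (h : G → ℂ) :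
    besSN θ A 1 (fun x => c * h x) = ‖c‖ₑ * besSN θ A 1 h := by
  simp only [besSN_one_eq, enorm_mul, lintegral_const_mul' _ _ enorm_ne_top, mul_div_assoc]
  exact ENNReal.limsup_const_mul_of_ne_top enorm_ne_top

variable [TopologicalSpace G] [AddCommGroup G] [MeasurableAdd G] [θ.IsAddRightInvariant]

theorem setLIntegral_comp_sub_le (B : Set G) {g : G → ℝ≥0∞} {C : ℝ≥0∞} (hC : ∀ x, g x ≤ C)
    (t : G) : ∫⁻ s in B, g (s - t) ∂θ ≤ ∫⁻ s in B, g s ∂θ + C * θ (kBoundary {-t} B) := by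
  set B' := (· + t) ⁻¹' B
  have htrans : ∫⁻ s in B, g (s - t) ∂θ = ∫⁻ s in B', g s ∂θ := by
    simpa using ((measurePreserving_add_right θ t).setLIntegral_comp_preimage_emb
      (measurableEmbedding_addRight t) (fun s => g (s - t)) B).symm
  have hB' : B' \ B ⊆ kBoundary {-t} B := fun x hx =>
    Or.inl ⟨subset_closure ⟨x + t, hx.1, -t, rfl, add_neg_cancel_right x t⟩, hx.2⟩
  calc ∫⁻ s in B, g (s - t) ∂θ = ∫⁻ s in B', g s ∂θ := htrans
    _ ≤ ∫⁻ s in B ∪ B' \ B, g s ∂θ := lintegral_mono_set (by simp)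
    _ ≤ ∫⁻ s in B, g s ∂θ + ∫⁻ s in B' \ B, g s ∂θ := lintegral_union_le _ _ _
    _ ≤ ∫⁻ s in B, g s ∂θ + ∫⁻ _ in B' \ B, C ∂θ := by gcongr with s; exact hC s
    _ ≤ ∫⁻ s in B, g s ∂θ + C * θ (kBoundary {-t} B) := by
        rw [setLIntegral_const]; gcongr

theorem besSN_one_comp_sub_le (hA : IsVanHove θ A) {h : G → ℂ} (hb : ∃ C, ∀ x, ‖h x‖ ≤ C)
    (t : G) : besSN θ A 1 (fun s => h (s - t)) ≤ besSN θ A 1 h := by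
  obtain ⟨C, hC⟩ := hb
  have hbdry : Tendsto (fun n => ENNReal.ofReal C * (θ (kBoundary {-t} (A n)) / θ (A n)))
      atTop (𝓝 0) := by
    simpa using ENNReal.Tendsto.const_mul (hA.boundary {-t} isCompact_singleton)
      (Or.inr ENNReal.ofReal_ne_top)
  rw [besSN_one_eq, besSN_one_eq]
  calc limsup (fun n => (∫⁻ s in A n, ‖h (s - t)‖ₑ ∂θ) / θ (A n)) atTop
      ≤ limsup (fun n => (∫⁻ s in A n, ‖h s‖ₑ ∂θ) / θ (A n)
          + ENNReal.ofReal C * (θ (kBoundary {-t} (A n)) / θ (A n))) atTop := by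
        refine limsup_le_limsup (Eventually.of_forall fun n => ?_)
        dsimp only
        rw [← mul_div_assoc, ← ENNReal.add_div]
        refine ENNReal.div_le_div_right ?_ _
        refine setLIntegral_comp_sub_le θ (A n) (fun x => ?_) t
        rw [← ofReal_norm]
        exact ENNReal.ofReal_le_ofReal (hC x)
    _ = _ := ENNReal.limsup_add_of_right_tendsto_zero hbdry _

end Besicovitch

section Length

variable {G : Type*} [AddCommGroup G]

theorem RelDense.mono [TopologicalSpace G] {S T : Set G} (hST : S ⊆ T) (h : RelDense S) :
    RelDense T := by
  obtain ⟨K, hK, hcov⟩ := h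
  exact ⟨K, hK, fun g => (hcov g).imp fun t ⟨ht, hgt⟩ => ⟨hST ht, hgt⟩⟩

structure IsLengthFunction (d : G → ℝ≥0∞) : Prop where
  add_le : ∀ s t, d (s + t) ≤ d s + d t
  neg : ∀ t, d (-t) = d t

theorem IsLengthFunction.le_sub_add_sub {d : G → ℝ≥0∞} (hd : IsLengthFunction d) (a b c : G) :
    d (a - b) ≤ d (a - c) + d (b - c) :=
  calc d (a - b) = d ((a - c) + -(b - c)) := by congr 1; abel
    _ ≤ d (a - c) + d (-(b - c)) := hd.add_le _ _
    _ = d (a - c) + d (b - c) := by rw [hd.neg]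

/-- Total boundedness of `(s, t) ↦ d (s - t)`. -/
def IsTotallyBoundedFor (d : G → ℝ≥0∞) : Prop :=
  ∀ ε : ℝ, 0 < ε → ∃ F : Finset G, ∀ g, ∃ c ∈ F, d (g - c) < ENNReal.ofReal ε

theorem IsTotallyBoundedFor.relDense [TopologicalSpace G] {d : G → ℝ≥0∞}
    (hd : IsTotallyBoundedFor d) : ∀ ε : ℝ, 0 < ε → RelDense {t | d t < ENNReal.ofReal ε} := by
  intro ε hε
  obtain ⟨F, hF⟩ := hd ε hε
  refine ⟨F, F.finite_toSet.isCompact, fun g => ?_⟩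
  obtain ⟨c, hc, hlt⟩ := hF g
  exact ⟨g - c, hlt, by simpa using hc⟩

theorem IsTotallyBoundedFor.of_le_add {d d₁ d₂ : G → ℝ≥0∞} (h₁ : IsTotallyBoundedFor d₁)
    (h₂ : IsTotallyBoundedFor d₂) (hl₁ : IsLengthFunction d₁) (hl₂ : IsLengthFunction d₂)
    (hle : ∀ t, d t ≤ d₁ t + d₂ t) : IsTotallyBoundedFor d := by
  classical
  intro ε hε
  have hε4 : 0 < ε / 4 := by positivity
  obtain ⟨F₁, hF₁⟩ := h₁ _ hε4
  obtain ⟨F₂, hF₂⟩ := h₂ _ hε4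
  let Near (p : G × G) (x : G) : Prop :=
    d₁ (x - p.1) < ENNReal.ofReal (ε / 4) ∧ d₂ (x - p.2) < ENNReal.ofReal (ε / 4)
  -- a net for `d` is obtained by choosing a point in each nonempty intersection of two cells
  let w (p : G × G) : G := Classical.epsilon (Near p)
  refine ⟨(F₁ ×ˢ F₂).image w, fun y => ?_⟩
  obtain ⟨a, ha, hya⟩ := hF₁ y
  obtain ⟨b, hb, hyb⟩ := hF₂ y
  have hw : Near (a, b) (w (a, b)) := Classical.epsilon_spec ⟨y, hya, hyb⟩
  refine ⟨w (a, b), Finset.mem_image_of_mem w (Finset.mem_product.2 ⟨ha, hb⟩), ?_⟩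
  calc d (y - w (a, b)) ≤ d₁ (y - w (a, b)) + d₂ (y - w (a, b)) := hle _
    _ ≤ (d₁ (y - a) + d₁ (w (a, b) - a)) + (d₂ (y - b) + d₂ (w (a, b) - b)) :=
        add_le_add (hl₁.le_sub_add_sub _ _ _) (hl₂.le_sub_add_sub _ _ _)
    _ < (ENNReal.ofReal (ε / 4) + ENNReal.ofReal (ε / 4))
          + (ENNReal.ofReal (ε / 4) + ENNReal.ofReal (ε / 4)) :=
        ENNReal.add_lt_add (ENNReal.add_lt_add hya hw.1) (ENNReal.add_lt_add hyb hw.2)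
    _ = ENNReal.ofReal ε := by
        rw [← ENNReal.ofReal_add hε4.le hε4.le, ← ENNReal.ofReal_add (by positivity) (by positivity)]
        congr 1
        ring

theorem isTotallyBoundedFor_of_relDense [TopologicalSpace G] [IsTopologicalAddGroup G]
    {d : G → ℝ≥0∞} (hadd : ∀ s t, d (s + t) ≤ d s + d t) (hd0 : Tendsto d (𝓝 0) (𝓝 0))
    (hdense : ∀ ε : ℝ, 0 < ε → RelDense {t | d t < ENNReal.ofReal ε}) :
    IsTotallyBoundedFor d := by
  intro ε hε
  have hε2 : 0 < ε / 2 := half_pos hε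
  set W := {v | d v < ENNReal.ofReal (ε / 2)}
  have hW : W ∈ 𝓝 0 := hd0 (gt_mem_nhds (ENNReal.ofReal_pos.2 hε2))
  obtain ⟨K, hK, hKd⟩ := hdense _ hε2
  obtain ⟨F, -, hcover⟩ := hK.elim_nhds_subcover (fun k => (· - k) ⁻¹' W)
    fun k _ => (continuous_sub_right k).continuousAt.preimage_mem_nhds (by simpa using hW)
  refine ⟨F, fun g => ?_⟩
  obtain ⟨t, ht, htK⟩ := hKd g
  obtain ⟨k, hk, hgk⟩ := Set.mem_iUnion₂.1 (hcover htK)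
  refine ⟨k, hk, ?_⟩
  calc d (g - k) = d ((g - t - k) + t) := by congr 1; abel
    _ ≤ d (g - t - k) + d t := hadd _ _
    _ < ENNReal.ofReal (ε / 2) + ENNReal.ofReal (ε / 2) := ENNReal.add_lt_add hgk ht
    _ = ENNReal.ofReal ε := by rw [← ENNReal.ofReal_add hε2.le hε2.le, add_halves]

end Length

section TransDefect

variable {G : Type*} [MeasurableSpace G] [AddCommGroup G] (θ : Measure G) (A : ℕ → Set G)

/-- `‖f - τ_t f‖_{b,1,𝒜}`. -/
def transDefect (f : G → ℂ) (t : G) : ℝ≥0∞ := besSN θ A 1 fun s => f s - f (s - t)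

variable {θ A}

theorem transDefect_add_le [MeasurableAdd G] {f g : G → ℂ} (hf : Measurable f) (t : G) :
    transDefect θ A (fun x => f x + g x) t ≤ transDefect θ A f t + transDefect θ A g t := by
  calc transDefect θ A (fun x => f x + g x) t
      = besSN θ A 1 fun x => (f x - f (x - t)) + (g x - g (x - t)) := by
        simp only [transDefect, add_sub_add_comm]
    _ ≤ _ := besSN_one_add_le θ A (hf.sub (hf.comp (measurable_sub_const' t)))

variable [TopologicalSpace G]

theorem meanAP_const (c : ℂ) : MeanAP θ A fun _ => c := by
  intro ε hε
  refine ⟨{0}, isCompact_singleton, fun g => ⟨g, ?_, by simp⟩⟩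
  refine (besSN_one_le_ofReal θ A (C := 0) fun _ => by simp).trans_lt ?_
  simpa using hε

theorem MeanAP.const_mul {f : G → ℂ} (hf : MeanAP θ A f) (c : ℂ) :
    MeanAP θ A fun x => c * f x := by
  intro ε hε
  have hδ : 0 < ε / (‖c‖ + 1) := by positivity
  refine (hf _ hδ).mono fun t (ht : transDefect θ A f t < _) => ?_
  have hmul : transDefect θ A (fun x => c * f x) t = ‖c‖ₑ * transDefect θ A f t := by
    simp only [transDefect, ← besSN_one_const_mul, mul_sub]
  show transDefect θ A (fun x => c * f x) t < ENNReal.ofReal ε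
  calc transDefect θ A (fun x => c * f x) t = ‖c‖ₑ * transDefect θ A f t := hmul
    _ ≤ ENNReal.ofReal ‖c‖ * ENNReal.ofReal (ε / (‖c‖ + 1)) := by
        rw [ofReal_norm]; gcongr
    _ = ENNReal.ofReal (‖c‖ * (ε / (‖c‖ + 1))) := (ENNReal.ofReal_mul (norm_nonneg c)).symm
    _ < ENNReal.ofReal ε := by
        rw [ENNReal.ofReal_lt_ofReal_iff hε, mul_div_assoc', div_lt_iff₀ (by positivity)]
        nlinarith

theorem MeanAP.of_tendstoUniformly {ι : Type*} {l : Filter ι} [l.NeBot] {f : ι → G → ℂ}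
    {g : G → ℂ} (hf : ∀ i, MeanAP θ A (f i)) (hfg : TendstoUniformly f g l) : MeanAP θ A g := by
  intro ε hε
  obtain ⟨i, hi⟩ := (Metric.tendstoUniformly_iff.1 hfg (ε / 4) (by positivity)).exists
  refine (hf i (ε / 2) (by positivity)).mono fun t (ht : transDefect θ A (f i) t < _) => ?_
  have hpt : ∀ s, ‖g s - g (s - t)‖ ≤ ‖f i s - f i (s - t)‖ + ε / 2 := fun s => by
    have h₁ := hi s
    have h₂ := hi (s - t)
    rw [dist_eq_norm] at h₁ h₂
    calc ‖g s - g (s - t)‖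
        = ‖(f i s - f i (s - t)) + (g s - f i s) - (g (s - t) - f i (s - t))‖ := by
          congr 1; ring
      _ ≤ ‖f i s - f i (s - t)‖ + ‖g s - f i s‖ + ‖g (s - t) - f i (s - t)‖ :=
          norm_sub_le_of_le (norm_add_le _ _) le_rfl
      _ ≤ ‖f i s - f i (s - t)‖ + ε / 2 := by linarith
  calc transDefect θ A g t ≤ transDefect θ A (f i) t + ENNReal.ofReal (ε / 2) :=
        besSN_one_le_add_ofReal θ A hpt
    _ < ENNReal.ofReal (ε / 2) + ENNReal.ofReal (ε / 2) :=
        ENNReal.add_lt_add_right ENNReal.ofReal_ne_top ht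
    _ = ENNReal.ofReal ε := by rw [← ENNReal.ofReal_add (by positivity) (by positivity), add_halves]

variable [MeasurableAdd G] [θ.IsAddRightInvariant]

theorem MeanAP.comp_sub (hA : IsVanHove θ A) {f : G → ℂ} (hb : ∃ C, ∀ x, ‖f x‖ ≤ C)
    (hf : MeanAP θ A f) (t : G) : MeanAP θ A fun s => f (s - t) := by
  intro ε hε
  refine (hf ε hε).mono fun u (hu : transDefect θ A f u < _) => lt_of_le_of_lt ?_ hu
  have h := besSN_one_comp_sub_le θ A hA (exists_bound_sub_comp_sub hb u) t
  simp only [sub_right_comm _ t u] at h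
  exact h

theorem transDefect_isLengthFunction (hA : IsVanHove θ A) {f : G → ℂ} (hf : Measurable f)
    (hb : ∃ C, ∀ x, ‖f x‖ ≤ C) : IsLengthFunction (transDefect θ A f) := by
  have hneg_le : ∀ t, transDefect θ A f (-t) ≤ transDefect θ A f t := fun t =>
    calc transDefect θ A f (-t) = besSN θ A 1 fun x => f (x - -t) - f (x - -t - t) :=
          besSN_congr_norm θ A 1 fun x => by
            rw [sub_neg_eq_add, add_sub_cancel_right, norm_sub_rev]
      _ ≤ transDefect θ A f t := besSN_one_comp_sub_le θ A hA (exists_bound_sub_comp_sub hb t) _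
  refine ⟨fun s t => ?_, fun t => le_antisymm (hneg_le t) (by simpa using hneg_le (-t))⟩
  calc transDefect θ A f (s + t)
      = besSN θ A 1 fun x => (f x - f (x - s)) + (f (x - s) - f (x - s - t)) := by
        simp only [transDefect, sub_add_sub_cancel, sub_sub]
    _ ≤ transDefect θ A f s + besSN θ A 1 fun x => f (x - s) - f (x - s - t) :=
        besSN_one_add_le θ A (hf.sub (hf.comp (measurable_sub_const' s)))
    _ ≤ transDefect θ A f s + transDefect θ A f t := by
        gcongr
        exact besSN_one_comp_sub_le θ A hA (exists_bound_sub_comp_sub hb t) s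

end TransDefect

section Uniform

variable {G : Type*} [AddCommGroup G] [UniformSpace G] [IsUniformAddGroup G] [MeasurableSpace G]
  {θ : Measure G} {A : ℕ → Set G}

theorem tendsto_transDefect_nhds_zero {f : G → ℂ} (hf : UniformContinuous f) :
    Tendsto (transDefect θ A f) (𝓝 0) (𝓝 0) := by
  rw [ENNReal.tendsto_nhds_zero]
  intro ε hε
  obtain ⟨δ, -, hδ, hδε⟩ := ENNReal.lt_iff_exists_real_btwn.1 hε
  have hU := hf (Metric.dist_mem_uniformity (ENNReal.ofReal_pos.1 hδ))
  rw [uniformity_eq_comap_nhds_zero G] at hU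
  obtain ⟨W, hW, hWU⟩ := hU
  filter_upwards [hW] with v hv
  refine (besSN_one_le_ofReal θ A fun s => ?_).trans hδε.le
  have hs : dist (f (s - v)) (f s) < δ := @hWU (s - v, s) (by simpa using hv)
  rw [dist_comm, dist_eq_norm] at hs
  exact hs.le

variable [OpensMeasurableSpace G] [MeasurableAdd G] [θ.IsAddRightInvariant]

theorem MeanAP.isTotallyBoundedFor (hA : IsVanHove θ A) {f : G → ℂ} (hf : CuFun f)
    (hmf : MeanAP θ A f) : IsTotallyBoundedFor (transDefect θ A f) :=
  isTotallyBoundedFor_of_relDense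
    (transDefect_isLengthFunction hA hf.1.continuous.measurable hf.2).add_le
    (tendsto_transDefect_nhds_zero hf.1) hmf

theorem MeanAP.add (hA : IsVanHove θ A) {f g : G → ℂ} (hf : CuFun f) (hg : CuFun g)
    (hmf : MeanAP θ A f) (hmg : MeanAP θ A g) : MeanAP θ A fun x => f x + g x :=
  IsTotallyBoundedFor.relDense <|
    (hmf.isTotallyBoundedFor hA hf).of_le_add (hmg.isTotallyBoundedFor hA hg)
      (transDefect_isLengthFunction hA hf.1.continuous.measurable hf.2)
      (transDefect_isLengthFunction hA hg.1.continuous.measurable hg.2)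
      (transDefect_add_le hf.1.continuous.measurable)

end Uniform

end MAP

theorem statement4_general
    {G : Type*} [AddCommGroup G] [UniformSpace G] [IsUniformAddGroup G]
    [MeasurableSpace G] [BorelSpace G]
    (θ : Measure G) [θ.IsAddHaarMeasure]
    (A : ℕ → Set G) (hA : IsVanHove θ A) :
    MeanAP θ A (fun _ => (0 : ℂ)) ∧
    (∀ f g : G → ℂ, CuFun f → CuFun g → MeanAP θ A f → MeanAP θ A g →
      MeanAP θ A (fun x => f x + g x)) ∧
    (∀ (c : ℂ) (f : G → ℂ), CuFun f → MeanAP θ A f → MeanAP θ A (fun x => c * f x)) ∧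
    (∀ (f : ℕ → G → ℂ) (g : G → ℂ), (∀ n, CuFun (f n) ∧ MeanAP θ A (f n)) → CuFun g →
      TendstoUniformly f g atTop → MeanAP θ A g) ∧
    (∀ (f : G → ℂ) (t : G), CuFun f → MeanAP θ A f → MeanAP θ A (fun s => f (s - t))) :=
  ⟨meanAP_const 0,
    fun _ _ hf hg hmf hmg => hmf.add hA hf hg hmg,
    fun c _ _ hmf => hmf.const_mul c,
    fun _ _ hf _ hfg => MeanAP.of_tendstoUniformly (fun n => (hf n).2) hfg,
    fun _ t hf hmf => hmf.comp_sub hA hf.2 t⟩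

theorem statement4
    {G : Type*} [AddCommGroup G] [UniformSpace G] [IsUniformAddGroup G]
    [LocallyCompactSpace G] [SigmaCompactSpace G] [T2Space G]
    [MeasurableSpace G] [BorelSpace G]
    (θ : Measure G) [θ.IsAddHaarMeasure]
    (A : ℕ → Set G) (hA : IsVanHove θ A) :
    MeanAP θ A (fun _ => (0 : ℂ)) ∧
    (∀ f g : G → ℂ, CuFun f → CuFun g → MeanAP θ A f → MeanAP θ A g →
      MeanAP θ A (fun x => f x + g x)) ∧
    (∀ (c : ℂ) (f : G → ℂ), CuFun f → MeanAP θ A f → MeanAP θ A (fun x => c * f x)) ∧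
    (∀ (f : ℕ → G → ℂ) (g : G → ℂ), (∀ n, CuFun (f n) ∧ MeanAP θ A (f n)) → CuFun g →
      TendstoUniformly f g atTop → MeanAP θ A g) ∧
    (∀ (f : G → ℂ) (t : G), CuFun f → MeanAP θ A f → MeanAP θ A (fun s => f (s - t))) :=
  statement4_general θ A hA
end
end

section
/- For each 1 ≤ p < ∞ and each van Hove sequence 𝒜, one has Bap^p_𝒜(G) ∩ L^∞(G) = Bap^1_𝒜(G) ∩ L^∞(G); that is, a bounded measurable function is Besicovitch p-almost periodic with respect to 𝒜 if and only if it is Besicovitch 1-almost periodic with respect to 𝒜. -/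
open MeasureTheory Filter Topology
open scoped ENNReal Pointwise

noncomputable section

/-!
Since `‖·‖_{b,1} ≤ ‖·‖_{b,p}` (Hölder for the normalised restrictions of `θ` to the `A n`), one
direction is immediate. Conversely, let `‖f‖ ≤ C` and let `P` be a trigonometric polynomial with
`‖f - P‖_{b,1}` small. Retracting `P` radially onto the ball of radius `C` gives `Q` with
`‖f - Q‖ ≤ ‖f - P‖` and `‖f - Q‖ ≤ 2C` pointwise, so `‖f - Q‖_{b,p}^p ≤ (2C)^(p-1) ‖f - P‖_{b,1}`.
As `Q = (C / max C √(P * conj P)) • P` and `P * conj P` is again a trigonometric polynomial,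
Weierstrass approximation of `s ↦ C / max C √s` makes `Q` a uniform limit of trigonometric
polynomials, and Minkowski's inequality finishes the proof.
-/

namespace MAP

section Truncate

variable {E : Type*} [NormedAddCommGroup E] [NormedSpace ℝ E] {C : ℝ}

def truncate (C : ℝ) (z : E) : E := (C / max C ‖z‖) • z

lemma norm_truncate_le (hC : 0 < C) (z : E) : ‖truncate C z‖ ≤ C := by
  have hmax : 0 < max C ‖z‖ := lt_max_of_lt_left hC
  rw [truncate, norm_smul, Real.norm_of_nonneg (div_pos hC hmax).le, div_mul_eq_mul_div,
    div_le_iff₀ hmax]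
  exact mul_le_mul_of_nonneg_left (le_max_right _ _) hC.le

lemma continuous_truncate (hC : 0 < C) : Continuous (truncate C : E → E) :=
  ((continuous_const.div (continuous_const.max continuous_norm)) fun _ =>
    (lt_max_of_lt_left hC).ne').smul continuous_id

lemma norm_sub_truncate_le {F : Type*} [NormedAddCommGroup F] [InnerProductSpace ℝ F]
    (hC : 0 < C) {a : F} (ha : ‖a‖ ≤ C) (b : F) :
    ‖a - truncate C b‖ ≤ ‖a - b‖ := by
  rcases le_or_gt ‖b‖ C with hb | hb
  · rw [truncate, max_eq_left hb, div_self hC.ne', one_smul]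
  have hb0 : 0 < ‖b‖ := hC.trans hb
  set t := C / ‖b‖ with ht
  have ht1 : t ≤ 1 := (div_le_one hb0).2 hb.le
  have htb : t * ‖b‖ = C := div_mul_cancel₀ _ hb0.ne'
  have hinner : inner ℝ a b ≤ C * ‖b‖ :=
    (real_inner_le_norm a b).trans (mul_le_mul_of_nonneg_right ha hb0.le)
  rw [truncate, max_eq_right hb.le, ← ht]
  refine le_of_pow_le_pow_left₀ two_ne_zero (norm_nonneg _) ?_
  rw [norm_sub_sq_real, norm_sub_sq_real, real_inner_smul_right, norm_smul,
    Real.norm_of_nonneg (div_pos hC hb0).le]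
  -- with `t‖b‖ = C`: `‖a - b‖² - ‖a - t b‖² = (1 - t) (2 (C‖b‖ - ⟪a, b⟫) + ‖b‖ (‖b‖ - C))`
  nlinarith [mul_nonneg (sub_nonneg.2 ht1) (sub_nonneg.2 hinner),
    mul_nonneg (sub_nonneg.2 ht1) (mul_nonneg hb0.le (sub_nonneg.2 hb.le))]

end Truncate

section TrigPoly

variable {G : Type*} [TopologicalSpace G] [AddCommGroup G]

def Char.one : Char G := ⟨1, fun _ => by simp, fun _ _ => by simp⟩

def Char.mul (χ ψ : Char G) : Char G :=
  ⟨χ.1 * ψ.1, fun x => by simp [χ.2.1 x, ψ.2.1 x],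
   fun x y => by simp only [ContinuousMap.mul_apply, χ.2.2 x y, ψ.2.2 x y]; ring⟩

def Char.conj (χ : Char G) : Char G :=
  ⟨⟨fun x => (starRingEnd ℂ) (χ.1 x), Complex.continuous_conj.comp χ.1.continuous⟩,
   fun x => by simp [χ.2.1 x], fun x y => by simp [χ.2.2 x y]⟩

lemma IsTrigPoly.of_fintype {ι : Type} [Fintype ι] (c : ι → ℂ) (χ : ι → Char G) :
    IsTrigPoly (fun x => ∑ i, c i * ((χ i : C(G, ℂ)) x)) := by
  let e := (Fintype.equivFin ι).symm
  refine ⟨Fintype.card ι, c ∘ e, χ ∘ e, funext fun x => ?_⟩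
  exact Fintype.sum_equiv e.symm _ _ fun i => by simp [e]

lemma IsTrigPoly.const (a : ℂ) : IsTrigPoly (fun _ : G => a) :=
  ⟨1, fun _ => a, fun _ => Char.one, by funext x; simp [Char.one]⟩

lemma IsTrigPoly.add {P Q : G → ℂ} (hP : IsTrigPoly P) (hQ : IsTrigPoly Q) :
    IsTrigPoly (fun x => P x + Q x) := by
  obtain ⟨n, c, χ, rfl⟩ := hP
  obtain ⟨m, d, ψ, rfl⟩ := hQ
  refine ⟨n + m, Fin.append c d, Fin.append χ ψ, funext fun x => ?_⟩
  simp [Fin.sum_univ_add]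

lemma IsTrigPoly.mul {P Q : G → ℂ} (hP : IsTrigPoly P) (hQ : IsTrigPoly Q) :
    IsTrigPoly (fun x => P x * Q x) := by
  obtain ⟨n, c, χ, rfl⟩ := hP
  obtain ⟨m, d, ψ, rfl⟩ := hQ
  convert IsTrigPoly.of_fintype (fun ij : Fin n × Fin m => c ij.1 * d ij.2)
    (fun ij => Char.mul (χ ij.1) (ψ ij.2)) using 2 with x
  rw [Finset.sum_mul_sum, ← Finset.sum_product', Finset.univ_product_univ]
  refine Finset.sum_congr rfl fun ij _ => ?_
  simp only [Char.mul, ContinuousMap.mul_apply]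
  ring

lemma IsTrigPoly.conj {P : G → ℂ} (hP : IsTrigPoly P) :
    IsTrigPoly (fun x => (starRingEnd ℂ) (P x)) := by
  obtain ⟨n, c, χ, rfl⟩ := hP
  exact ⟨n, fun i => (starRingEnd ℂ) (c i), fun i => Char.conj (χ i), by funext x; simp [Char.conj]⟩

lemma IsTrigPoly.aeval {P : G → ℂ} (hP : IsTrigPoly P) (q : Polynomial ℝ) :
    IsTrigPoly (fun x => Polynomial.aeval (P x) q) := by
  induction q using Polynomial.induction_on with
  | C a => simpa using IsTrigPoly.const (a : ℂ)
  | add q r hq hr => simpa using hq.add hr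
  | monomial n a ih => simpa [pow_succ, mul_assoc] using ih.mul hP

lemma IsTrigPoly.continuous {P : G → ℂ} (hP : IsTrigPoly P) : Continuous P := by
  obtain ⟨n, c, χ, rfl⟩ := hP
  fun_prop

lemma IsTrigPoly.exists_bound {P : G → ℂ} (hP : IsTrigPoly P) :
    ∃ S : ℝ, 0 < S ∧ ∀ x, ‖P x‖ ≤ S := by
  obtain ⟨n, c, χ, rfl⟩ := hP
  refine ⟨∑ i, ‖c i‖ + 1, by positivity, fun x => ?_⟩
  calc ‖∑ i, c i * (χ i : C(G, ℂ)) x‖ ≤ ∑ i, ‖c i * (χ i : C(G, ℂ)) x‖ := norm_sum_le _ _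
    _ = ∑ i, ‖c i‖ := by simp [(χ _).2.1 x]
    _ ≤ ∑ i, ‖c i‖ + 1 := le_add_of_nonneg_right zero_le_one

lemma IsTrigPoly.exists_near_truncate {P : G → ℂ} (hP : IsTrigPoly P) {C η : ℝ} (hC : 0 < C)
    (hη : 0 < η) : ∃ R : G → ℂ, IsTrigPoly R ∧ ∀ x, ‖truncate C (P x) - R x‖ ≤ η := by
  obtain ⟨S, hS, hPS⟩ := hP.exists_bound
  have hcont : ContinuousOn (fun s : ℝ => C / max C √s) (Set.Icc 0 (S ^ 2)) :=
    (continuous_const.div (continuous_const.max Real.continuous_sqrt)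
      fun _ => (lt_max_of_lt_left hC).ne').continuousOn
  obtain ⟨q, hq⟩ := exists_polynomial_near_of_continuousOn 0 (S ^ 2) _ hcont (η / S)
    (div_pos hη hS)
  refine ⟨fun x => Polynomial.aeval (P x * (starRingEnd ℂ) (P x)) q * P x,
    (hP.mul hP.conj).aeval q |>.mul hP, fun x => ?_⟩
  have hR : Polynomial.aeval (P x * (starRingEnd ℂ) (P x)) q * P x
      = q.eval (‖P x‖ ^ 2) • P x := by
    rw [Complex.mul_conj, Complex.normSq_eq_norm_sq,
      ← Complex.coe_algebraMap, Polynomial.aeval_algebraMap_apply, Complex.real_smul]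
    rfl
  have hqx := hq (‖P x‖ ^ 2) ⟨sq_nonneg _, pow_le_pow_left₀ (norm_nonneg _) (hPS x) 2⟩
  rw [Real.sqrt_sq (norm_nonneg _), abs_sub_comm] at hqx
  calc ‖truncate C (P x) - Polynomial.aeval (P x * (starRingEnd ℂ) (P x)) q * P x‖
      = |C / max C ‖P x‖ - q.eval (‖P x‖ ^ 2)| * ‖P x‖ := by
        rw [hR, truncate, ← sub_smul, norm_smul, Real.norm_eq_abs]
    _ ≤ η / S * S := mul_le_mul hqx.le (hPS x) (norm_nonneg _) (div_pos hη hS).le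
    _ = η := div_mul_cancel₀ _ hS.ne'

end TrigPoly

end MAP

/-- A version of `ENNReal.limsup_add_le` without `CountableInterFilter`. -/
lemma ENNReal.limsup_add_le' {ι : Type*} {F : Filter ι} (u v : ι → ℝ≥0∞) :
    limsup (u + v) F ≤ limsup u F + limsup v F := by
  refine ENNReal.le_of_forall_pos_le_add fun ε hε hfin => ?_
  have hlt : ∀ w : ι → ℝ≥0∞, limsup w F < ⊤ → limsup w F < limsup w F + (ε : ℝ≥0∞) / 2 :=
    fun w hw => ENNReal.lt_add_right hw.ne (by simpa using hε.ne')
  have hu := eventually_lt_of_limsup_lt (hlt u (lt_of_le_of_lt le_self_add hfin))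
  have hv := eventually_lt_of_limsup_lt (hlt v (lt_of_le_of_lt le_add_self hfin))
  calc limsup (u + v) F ≤ (limsup u F + ε / 2) + (limsup v F + ε / 2) :=
        limsup_le_of_le (by isBoundedDefault) ((hu.and hv).mono fun n h => add_le_add h.1.le h.2.le)
    _ = limsup u F + limsup v F + ε := by rw [add_add_add_comm, ENNReal.add_halves]

namespace MAP

section Besicovitch

variable {G : Type*} [MeasurableSpace G]

def avgMeasure (θ : Measure G) (S : Set G) : Measure G := (θ S)⁻¹ • θ.restrict S

lemma avgMeasure_univ_le_one (θ : Measure G) (S : Set G) : avgMeasure θ S Set.univ ≤ 1 := by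
  simp [avgMeasure]

variable (θ : Measure G) (A : ℕ → Set G) {p : ℝ}

lemma lpAvg_eq_eLpNorm_rpow (hp : 0 < p) (S : Set G) (g : G → ℂ) :
    lpAvg θ S p g = eLpNorm g (ENNReal.ofReal p) (avgMeasure θ S) ^ p := by
  rw [eLpNorm_eq_lintegral_rpow_enorm_toReal (by simpa using hp) ENNReal.ofReal_ne_top,
    ENNReal.toReal_ofReal hp.le, ← ENNReal.rpow_mul, one_div_mul_cancel hp.ne', ENNReal.rpow_one,
    avgMeasure, lintegral_smul_measure, lpAvg, div_eq_mul_inv, mul_comm, smul_eq_mul]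
  congr 2 with t
  rw [← ofReal_norm, ENNReal.ofReal_rpow_of_nonneg (norm_nonneg _) hp.le]

lemma besSN_eq_limsup_eLpNorm (hp : 0 < p) (g : G → ℂ) :
    besSN θ A p g = limsup (fun n => eLpNorm g (ENNReal.ofReal p) (avgMeasure θ (A n))) atTop := by
  have key := (ENNReal.orderIsoRpow (1 / p) (one_div_pos.2 hp)).limsup_apply
    (u := fun n => lpAvg θ (A n) p g) (f := atTop)
  simp only [ENNReal.orderIsoRpow_apply, lpAvg_eq_eLpNorm_rpow θ hp, ← ENNReal.rpow_mul,
    mul_one_div_cancel hp.ne', ENNReal.rpow_one] at key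
  rw [besSN, ← key]
  simp only [lpAvg_eq_eLpNorm_rpow θ hp]

lemma besSN_mono (hp : 0 < p) {g h : G → ℂ} (hgh : ∀ x, ‖g x‖ ≤ ‖h x‖) :
    besSN θ A p g ≤ besSN θ A p h := by
  simp only [besSN_eq_limsup_eLpNorm θ A hp]
  exact limsup_le_limsup (Eventually.of_forall fun n => eLpNorm_mono hgh)

lemma besSN_le_of_norm_le (hp : 0 < p) {g : G → ℂ} {c : ℝ} (hgc : ∀ x, ‖g x‖ ≤ c) :
    besSN θ A p g ≤ ENNReal.ofReal c := by
  rw [besSN_eq_limsup_eLpNorm θ A hp]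
  refine limsup_le_of_le (by isBoundedDefault) (Eventually.of_forall fun n => ?_)
  calc eLpNorm g (ENNReal.ofReal p) (avgMeasure θ (A n))
      ≤ avgMeasure θ (A n) Set.univ ^ (ENNReal.ofReal p).toReal⁻¹ * ENNReal.ofReal c :=
        eLpNorm_le_of_ae_bound (Eventually.of_forall hgc)
    _ ≤ 1 * ENNReal.ofReal c := by
        gcongr
        exact ENNReal.rpow_le_one (avgMeasure_univ_le_one θ _) (by positivity)
    _ = ENNReal.ofReal c := one_mul _

lemma besSN_add_le (hp : 1 ≤ p) {g h : G → ℂ} (hg : AEStronglyMeasurable g θ)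
    (hh : AEStronglyMeasurable h θ) :
    besSN θ A p (fun x => g x + h x) ≤ besSN θ A p g + besSN θ A p h := by
  have hp0 : 0 < p := zero_lt_one.trans_le hp
  simp only [besSN_eq_limsup_eLpNorm θ A hp0]
  refine (limsup_le_limsup (Eventually.of_forall fun n => eLpNorm_add_le
    (hg.restrict.smul_measure _) (hh.restrict.smul_measure _) (by simpa using hp))).trans ?_
  exact ENNReal.limsup_add_le' _ _

lemma besSN_one_le_besSN (hp : 1 ≤ p) {g : G → ℂ} (hg : AEStronglyMeasurable g θ) :
    besSN θ A 1 g ≤ besSN θ A p g := by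
  have hp0 : 0 < p := zero_lt_one.trans_le hp
  rw [besSN_eq_limsup_eLpNorm θ A one_pos, besSN_eq_limsup_eLpNorm θ A hp0]
  refine limsup_le_limsup (Eventually.of_forall fun n => ?_)
  calc eLpNorm g (ENNReal.ofReal 1) (avgMeasure θ (A n))
      ≤ eLpNorm g (ENNReal.ofReal p) (avgMeasure θ (A n)) * avgMeasure θ (A n) Set.univ ^
          (1 / (ENNReal.ofReal 1).toReal - 1 / (ENNReal.ofReal p).toReal) :=
        eLpNorm_le_eLpNorm_mul_rpow_measure_univ (ENNReal.ofReal_le_ofReal hp)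
          (hg.restrict.smul_measure _)
    _ ≤ eLpNorm g (ENNReal.ofReal p) (avgMeasure θ (A n)) * 1 := by
        gcongr
        refine ENNReal.rpow_le_one (avgMeasure_univ_le_one θ _) ?_
        rw [ENNReal.toReal_ofReal zero_le_one, ENNReal.toReal_ofReal hp0.le, sub_nonneg]
        exact div_le_div_of_nonneg_left zero_le_one one_pos hp
    _ = eLpNorm g (ENNReal.ofReal p) (avgMeasure θ (A n)) := mul_one _

lemma besSN_rpow_le_of_norm_le (hp : 1 ≤ p) {g : G → ℂ} {B : ℝ} (hgB : ∀ x, ‖g x‖ ≤ B) :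
    besSN θ A p g ^ p ≤ ENNReal.ofReal (B ^ (p - 1)) * besSN θ A 1 g := by
  have hp0 : 0 < p := zero_lt_one.trans_le hp
  have hpt : ∀ x, ‖g x‖ ^ p ≤ B ^ (p - 1) * ‖g x‖ ^ (1 : ℝ) := fun x => by
    calc ‖g x‖ ^ p = ‖g x‖ ^ (p - 1) * ‖g x‖ ^ (1 : ℝ) := by
          rw [← Real.rpow_add' (norm_nonneg _) (by linarith), sub_add_cancel]
      _ ≤ B ^ (p - 1) * ‖g x‖ ^ (1 : ℝ) := by
          gcongr
          exact hgB x
  have havg : ∀ S, lpAvg θ S p g ≤ ENNReal.ofReal (B ^ (p - 1)) * lpAvg θ S 1 g := fun S => by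
    rw [lpAvg, lpAvg, ← mul_div_assoc, ← lintegral_const_mul' _ _ ENNReal.ofReal_ne_top]
    gcongr with x
    rw [← ENNReal.ofReal_mul (Real.rpow_nonneg ((norm_nonneg _).trans (hgB x)) _)]
    exact ENNReal.ofReal_le_ofReal (hpt x)
  rw [besSN, besSN, div_one, ENNReal.rpow_one, ← ENNReal.rpow_mul, one_div_mul_cancel hp0.ne',
    ENNReal.rpow_one, ← ENNReal.limsup_const_mul_of_ne_top ENNReal.ofReal_ne_top]
  exact limsup_le_limsup (Eventually.of_forall fun n => havg (A n))

end Besicovitch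

section Approximation

variable {G : Type*} [MeasurableSpace G] [TopologicalSpace G] (θ : Measure G) {f : G → ℂ} {C : ℝ}

lemma memLpLoc_of_norm_le [IsFiniteMeasureOnCompacts θ] (hf : Measurable f)
    (hfC : ∀ x, ‖f x‖ ≤ C) {q : ℝ} (hq : 0 ≤ q) : MemLpLoc θ q f := by
  refine ⟨hf.aestronglyMeasurable, fun K hK => ?_⟩
  calc ∫⁻ t in K, ENNReal.ofReal (‖f t‖ ^ q) ∂θ ≤ ∫⁻ _ in K, ENNReal.ofReal (C ^ q) ∂θ :=
        lintegral_mono fun t => ENNReal.ofReal_le_ofReal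
          (Real.rpow_le_rpow (norm_nonneg _) (hfC t) hq)
    _ = ENNReal.ofReal (C ^ q) * θ K := setLIntegral_const _ _
    _ < ⊤ := ENNReal.mul_lt_top ENNReal.ofReal_lt_top hK.measure_lt_top

variable [AddCommGroup G] (A : ℕ → Set G) {p : ℝ}

lemma exists_trigPoly_besSN_lt [OpensMeasurableSpace G] (hp : 1 ≤ p) (hf : Measurable f)
    (hC : 0 < C) (hfC : ∀ x, ‖f x‖ ≤ C)
    (hap : ∀ δ : ℝ, 0 < δ →
      ∃ P : G → ℂ, IsTrigPoly P ∧ besSN θ A 1 (fun x => f x - P x) < ENNReal.ofReal δ)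
    {ε : ℝ} (hε : 0 < ε) :
    ∃ R : G → ℂ, IsTrigPoly R ∧ besSN θ A p (fun x => f x - R x) < ENNReal.ofReal ε := by
  have hp0 : 0 < p := zero_lt_one.trans_le hp
  set K : ℝ := (2 * C) ^ (p - 1)
  have hK : 0 < K := Real.rpow_pos_of_pos (by linarith) _
  obtain ⟨P, hP, hfP⟩ := hap ((ε / 2) ^ p / K) (by positivity)
  obtain ⟨R, hR, hQR⟩ := hP.exists_near_truncate hC (half_pos hε)
  set Q : G → ℂ := fun x => truncate C (P x)
  have hQ : Continuous Q := (continuous_truncate hC).comp hP.continuous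
  have hfQ_le_fP : ∀ x, ‖f x - Q x‖ ≤ ‖f x - P x‖ := fun x => norm_sub_truncate_le hC (hfC x) _
  have hfQ_bound : ∀ x, ‖f x - Q x‖ ≤ 2 * C := fun x =>
    (norm_sub_le _ _).trans (by linarith [hfC x, norm_truncate_le hC (P x)])
  have hfQ : besSN θ A p (fun x => f x - Q x) < ENNReal.ofReal (ε / 2) := by
    refine (ENNReal.rpow_lt_rpow_iff hp0).1 ?_
    calc besSN θ A p (fun x => f x - Q x) ^ p
        ≤ ENNReal.ofReal K * besSN θ A 1 (fun x => f x - Q x) :=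
          besSN_rpow_le_of_norm_le θ A hp hfQ_bound
      _ ≤ ENNReal.ofReal K * besSN θ A 1 (fun x => f x - P x) := by
          gcongr
          exact besSN_mono θ A one_pos hfQ_le_fP
      _ < ENNReal.ofReal K * ENNReal.ofReal ((ε / 2) ^ p / K) :=
          ENNReal.mul_lt_mul_right (by simpa using hK) ENNReal.ofReal_ne_top hfP
      _ = ENNReal.ofReal (ε / 2) ^ p := by
          rw [← ENNReal.ofReal_mul hK.le, mul_div_cancel₀ _ hK.ne',
            ENNReal.ofReal_rpow_of_nonneg (half_pos hε).le hp0.le]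
  have hQR' := besSN_le_of_norm_le θ A hp0 hQR
  refine ⟨R, hR, ?_⟩
  calc besSN θ A p (fun x => f x - R x)
      = besSN θ A p (fun x => (f x - Q x) + (Q x - R x)) := by simp only [sub_add_sub_cancel]
    _ ≤ besSN θ A p (fun x => f x - Q x) + besSN θ A p (fun x => Q x - R x) :=
        besSN_add_le θ A hp (hf.sub hQ.measurable).aestronglyMeasurable
          (hQ.sub hR.continuous).aestronglyMeasurable
    _ < ENNReal.ofReal (ε / 2) + ENNReal.ofReal (ε / 2) :=
        ENNReal.add_lt_add_of_lt_of_le (hQR'.trans_lt ENNReal.ofReal_lt_top).ne hfQ hQR'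
    _ = ENNReal.ofReal ε := by rw [← ENNReal.ofReal_add (half_pos hε).le (half_pos hε).le,
          add_halves]

end Approximation

end MAP

open MAP

theorem statement8_general
    {G : Type*} [AddCommGroup G] [TopologicalSpace G]
    [MeasurableSpace G] [BorelSpace G]
    (θ : Measure G) [θ.IsAddHaarMeasure]
    (p : ℝ) (hp : 1 ≤ p) (A : ℕ → Set G)
    (f : G → ℂ) (hmeas : Measurable f) (hbd : ∃ C : ℝ, ∀ x, ‖f x‖ ≤ C) :
    BapMem θ A p f ↔ BapMem θ A 1 f := by
  obtain ⟨C, hC⟩ := hbd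
  have hfC : ∀ x, ‖f x‖ ≤ max C 1 := fun x => (hC x).trans (le_max_left _ _)
  constructor
  · rintro ⟨-, hap⟩
    refine ⟨memLpLoc_of_norm_le θ hmeas hfC zero_le_one, fun ε hε => ?_⟩
    obtain ⟨P, hP, hfP⟩ := hap ε hε
    exact ⟨P, hP, (besSN_one_le_besSN θ A hp
      (hmeas.sub hP.continuous.measurable).aestronglyMeasurable).trans_lt hfP⟩
  · rintro ⟨-, hap⟩
    exact ⟨memLpLoc_of_norm_le θ hmeas hfC (zero_le_one.trans hp),
      fun ε hε => exists_trigPoly_besSN_lt θ A hp hmeas (by positivity) hfC hap hε⟩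

theorem statement8
    {G : Type*} [AddCommGroup G] [TopologicalSpace G] [IsTopologicalAddGroup G]
    [LocallyCompactSpace G] [SigmaCompactSpace G] [T2Space G]
    [MeasurableSpace G] [BorelSpace G]
    (θ : Measure G) [θ.IsAddHaarMeasure]
    (p : ℝ) (hp : 1 ≤ p) (A : ℕ → Set G) (hA : IsVanHove θ A)
    (f : G → ℂ) (hmeas : Measurable f) (hbd : ∃ C : ℝ, ∀ x, ‖f x‖ ≤ C) :
    BapMem θ A p f ↔ BapMem θ A 1 f :=
  statement8_general θ p hp A f hmeas hbd
end
end
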